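/- (Second finite difference of total working-set size recovers the reuse-time histogram) For every trace of length n with m distinct data items, define W(x) = Σ_{t=x}^{n} ω(t,x) for 1 ≤ x ≤ n and W(0) = 0. Then for every x with 1 ≤ x ≤ n−1, W(x+1) − 2·W(x) + W(x−1) = −rt(x) − |{e ∈ M : f_e = x}| − |{e ∈ M : l_e = n−x+1}|. In particular, the reuse-time histogram is determined by the total working-set sizes together with the first- and last-access times. -/
import Mathlib


open Finset

/-- The data set of a trace `a` of length `n` (indices 1..n). -/
def dataSet (a : ℕ → ℕ) (n : ℕ) : Finset ℕ := (Finset.Icc 1 n).image a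

/-- A trace is address-independent: data items are numbered in order of first appearance. -/
def isAI (a : ℕ → ℕ) (n : ℕ) : Prop :=
  ∀ t ∈ Finset.Icc 1 n, 1 ≤ a t ∧ a t ≤ 1 + ((Finset.Ico 1 t).image a).card

/-- Indices `s < t` (with `s ≥ 1`) accessing the same datum as `t`. -/
def prevSet (a : ℕ → ℕ) (t : ℕ) : Finset ℕ :=
  (Finset.Ico 1 t).filter (fun s => a s = a t)

/-- Reuse time of access `t`: `t - s*` where `s*` is the previous access to the same
datum, or `⊤` for a first access. -/
def reuseTime (a : ℕ → ℕ) (t : ℕ) : ℕ∞ :=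
  if h : (prevSet a t).Nonempty then ((t - (prevSet a t).max' h : ℕ) : ℕ∞) else ⊤

/-- Reuse distance of access `t`: the number of distinct data accessed in
`a(s*+1), …, a(t)` where `s*` is the previous access to the same datum,
or `⊤` for a first access. -/
def reuseDist (a : ℕ → ℕ) (t : ℕ) : ℕ∞ :=
  if h : (prevSet a t).Nonempty then
    ((((Finset.Icc ((prevSet a t).max' h + 1) t).image a).card : ℕ) : ℕ∞)
  else ⊤

/-- Reuse-time histogram: number of accesses whose reuse time equals `i`. -/
def rtHist (a : ℕ → ℕ) (n i : ℕ) : ℕ :=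
  ((Finset.Icc 1 n).filter (fun t => reuseTime a t = (i : ℕ∞))).card

/-- Reuse-distance histogram: number of accesses whose reuse distance equals `v`. -/
def rdHist (a : ℕ → ℕ) (n v : ℕ) : ℕ :=
  ((Finset.Icc 1 n).filter (fun t => reuseDist a t = (v : ℕ∞))).card

/-- First access time of datum `e`. -/
noncomputable def firstAcc (a : ℕ → ℕ) (n e : ℕ) : ℕ :=
  sInf {t | t ∈ Finset.Icc 1 n ∧ a t = e}

/-- Last access time of datum `e`. -/
noncomputable def lastAcc (a : ℕ → ℕ) (n e : ℕ) : ℕ :=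
  sSup {t | t ∈ Finset.Icc 1 n ∧ a t = e}

/-- The sorted list of access times of datum `e` in the trace. -/
def occList (a : ℕ → ℕ) (n e : ℕ) : List ℕ :=
  ((Finset.Icc 1 n).filter (fun t => a t = e)).sort (· ≤ ·)

/-- Working-set size `ω(t,x)`: distinct data accessed in the window `a(t-x+1), …, a(t)`. -/
def wss (a : ℕ → ℕ) (t x : ℕ) : ℕ := ((Finset.Icc (t - x + 1) t).image a).card

/-- Footprint: the average working-set size over all length-`x` windows. -/
def fp (a : ℕ → ℕ) (n x : ℕ) : ℚ :=
  (∑ t ∈ Finset.Icc x n, (wss a t x : ℚ)) / ((n : ℚ) - (x : ℚ) + 1)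

/-- Total working-set size `W(x) = Σ_{t=x}^{n} ω(t,x)`, with `W(0) = 0`. -/
def totalW (a : ℕ → ℕ) (n x : ℕ) : ℤ :=
  if x = 0 then 0 else ∑ t ∈ Finset.Icc x n, (wss a t x : ℤ)

/-- Steady-state footprint `ss-fp(x) = m - (1/n) Σ_{i=x+1}^{n-1} (i-x)·rt(i)`. -/
def ssfp (a : ℕ → ℕ) (n x : ℕ) : ℚ :=
  ((dataSet a n).card : ℚ)
    - (1 / (n : ℚ)) * ∑ i ∈ Finset.Icc (x + 1) (n - 1), ((i : ℚ) - (x : ℚ)) * (rtHist a n i : ℚ)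

/-! ### Auxiliary material -/

/-- The set of indices in the window `[t-x+1, t-1]` accessing the same datum as `t`. -/
def Pset (a : ℕ → ℕ) (t x : ℕ) : Finset ℕ :=
  (Finset.Icc (t - x + 1) (t - 1)).filter (fun s => a s = a t)

lemma mem_prevSet {a : ℕ → ℕ} {t s : ℕ} :
    s ∈ prevSet a t ↔ (1 ≤ s ∧ s < t) ∧ a s = a t := by
  simp [prevSet, Finset.mem_filter, Finset.mem_Ico, and_assoc]

lemma totalW_eq (a : ℕ → ℕ) (n y : ℕ) :
    totalW a n y = ∑ t ∈ Finset.Icc y n, (wss a t y : ℤ) := by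
  unfold totalW
  rcases Nat.eq_zero_or_pos y with hy | hy
  · subst hy
    rw [if_pos rfl]
    have : ∀ t ∈ Finset.Icc 0 n, (wss a t 0 : ℤ) = 0 := by
      intro t _
      simp [wss, show Finset.Icc (t - 0 + 1) t = ∅ by
        rw [Finset.Icc_eq_empty_iff]; omega]
    rw [Finset.sum_congr rfl this]; simp
  · rw [if_neg (by omega)]

lemma wss_succ (a : ℕ → ℕ) (t x : ℕ) (hx : 1 ≤ x) (hxt : x ≤ t) :
    (wss a t x : ℤ)
      = (wss a (t - 1) (x - 1) : ℤ) + (if (Pset a t x).Nonempty then 0 else 1) := by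
  unfold wss Pset
  have h1 : t - 1 - (x - 1) + 1 = t - x + 1 := by omega
  rw [h1]
  have h2 : Finset.Icc (t - x + 1) t = insert t (Finset.Icc (t - x + 1) (t - 1)) := by
    ext s; simp only [Finset.mem_Icc, Finset.mem_insert]; omega
  rw [h2, Finset.image_insert, Finset.card_insert_eq_ite]
  have h3 : a t ∈ (Finset.Icc (t - x + 1) (t - 1)).image a ↔
      ((Finset.Icc (t - x + 1) (t - 1)).filter (fun s => a s = a t)).Nonempty := by
    simp [Finset.mem_image, Finset.filter_nonempty_iff]
  by_cases hc : ((Finset.Icc (t - x + 1) (t - 1)).filter (fun s => a s = a t)).Nonempty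
  · rw [if_pos (h3.mpr hc), if_pos hc]; push_cast; ring
  · rw [if_neg (fun h => hc (h3.mp h)), if_neg hc]; push_cast; ring

lemma firstDiff (a : ℕ → ℕ) (n x : ℕ) (hx : 1 ≤ x) (hxn : x ≤ n) :
    totalW a n x - totalW a n (x - 1)
      = (∑ t ∈ Finset.Icc x n, if (Pset a t x).Nonempty then (0 : ℤ) else 1)
        - (wss a n (x - 1) : ℤ) := by
  rw [totalW_eq, totalW_eq]
  have key : ∀ t ∈ Finset.Icc x n, (wss a t x : ℤ)
      = (wss a (t - 1) (x - 1) : ℤ) + (if (Pset a t x).Nonempty then 0 else 1) := by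
    intro t ht
    rw [Finset.mem_Icc] at ht
    exact wss_succ a t x hx (by omega)
  rw [Finset.sum_congr rfl key, Finset.sum_add_distrib]
  have hmap : Finset.Icc x n = (Finset.Icc (x - 1) (n - 1)).map (addRightEmbedding 1) := by
    rw [Finset.map_add_right_Icc]
    congr 1 <;> omega
  have h4 : ∑ t ∈ Finset.Icc x n, (wss a (t - 1) (x - 1) : ℤ)
      = ∑ t ∈ Finset.Icc (x - 1) (n - 1), (wss a t (x - 1) : ℤ) := by
    rw [hmap, Finset.sum_map]
    apply Finset.sum_congr rfl
    intro t _
    simp [addRightEmbedding]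
  have h5 : Finset.Icc (x - 1) n = insert n (Finset.Icc (x - 1) (n - 1)) := by
    ext s; simp only [Finset.mem_Icc, Finset.mem_insert]; omega
  have h6 : n ∉ Finset.Icc (x - 1) (n - 1) := by
    rw [Finset.mem_Icc]; omega
  rw [h4, h5, Finset.sum_insert h6]
  ring

lemma Pset_nonempty_iff (a : ℕ → ℕ) (t x : ℕ) :
    (Pset a t x).Nonempty ↔
      ∃ h : (prevSet a t).Nonempty, t < (prevSet a t).max' h + x := by
  constructor
  · rintro ⟨s, hs⟩
    rw [Pset, Finset.mem_filter, Finset.mem_Icc] at hs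
    obtain ⟨⟨hs1, hs2⟩, hs3⟩ := hs
    have hsp : s ∈ prevSet a t := mem_prevSet.mpr ⟨⟨by omega, by omega⟩, hs3⟩
    have hne : (prevSet a t).Nonempty := ⟨s, hsp⟩
    refine ⟨hne, ?_⟩
    have := Finset.le_max' _ s hsp
    omega
  · rintro ⟨h, hlt⟩
    have hm := (prevSet a t).max'_mem h
    rw [mem_prevSet] at hm
    refine ⟨(prevSet a t).max' h, ?_⟩
    rw [Pset, Finset.mem_filter, Finset.mem_Icc]
    exact ⟨⟨by omega, by omega⟩, hm.2⟩

lemma Pset_diff (a : ℕ → ℕ) (t x : ℕ) (hx : 1 ≤ x) (hxt : x + 1 ≤ t) :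
    (if (Pset a t (x + 1)).Nonempty then (0 : ℤ) else 1)
      - (if (Pset a t x).Nonempty then (0 : ℤ) else 1)
      = -(if reuseTime a t = (x : ℕ∞) then (1 : ℤ) else 0) := by
  by_cases h : (prevSet a t).Nonempty
  · set M := (prevSet a t).max' h with hM
    have hmem := (prevSet a t).max'_mem h
    rw [mem_prevSet] at hmem
    have hMt : M < t := hmem.1.2
    have hM1 : 1 ≤ M := hmem.1.1
    have hrt : reuseTime a t = ((t - M : ℕ) : ℕ∞) := by
      rw [reuseTime, dif_pos h]
    have e1 : (Pset a t (x + 1)).Nonempty ↔ t < M + (x + 1) := by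
      rw [Pset_nonempty_iff]
      constructor
      · rintro ⟨_, hh⟩; exact hh
      · intro hh; exact ⟨h, hh⟩
    have e2 : (Pset a t x).Nonempty ↔ t < M + x := by
      rw [Pset_nonempty_iff]
      constructor
      · rintro ⟨_, hh⟩; exact hh
      · intro hh; exact ⟨h, hh⟩
    have ert : reuseTime a t = (x : ℕ∞) ↔ t - M = x := by
      rw [hrt, Nat.cast_inj]
    by_cases h2 : t < M + x
    · rw [if_pos (e1.mpr (by omega)), if_pos (e2.mpr h2),
        if_neg (by rw [ert]; omega)]
      ring
    · by_cases h1 : t < M + (x + 1)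
      · rw [if_pos (e1.mpr h1), if_neg (by rw [e2]; omega),
          if_pos (by rw [ert]; omega)]
        ring
      · rw [if_neg (by rw [e1]; omega), if_neg (by rw [e2]; omega),
          if_neg (by rw [ert]; omega)]
        ring
  · have h1 : ¬(Pset a t (x + 1)).Nonempty := by
      rw [Pset_nonempty_iff]; rintro ⟨hh, _⟩; exact h hh
    have h2 : ¬(Pset a t x).Nonempty := by
      rw [Pset_nonempty_iff]; rintro ⟨hh, _⟩; exact h hh
    have h3 : reuseTime a t ≠ (x : ℕ∞) := by
      rw [reuseTime, dif_neg h]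
      exact WithTop.top_ne_coe
    rw [if_neg h1, if_neg h2, if_neg h3]
    ring

lemma rt_eq_imp (a : ℕ → ℕ) (t x : ℕ) (hx : 1 ≤ x)
    (h : reuseTime a t = (x : ℕ∞)) : x + 1 ≤ t := by
  rw [reuseTime] at h
  split at h
  · next hne =>
    have hmem := (prevSet a t).max'_mem hne
    rw [mem_prevSet] at hmem
    have := Nat.cast_inj.mp h
    omega
  · exact absurd h.symm (WithTop.coe_ne_top)

lemma rtHist_eq (a : ℕ → ℕ) (n x : ℕ) (hx : 1 ≤ x) :
    (rtHist a n x : ℤ)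
      = ∑ t ∈ Finset.Icc (x + 1) n, (if reuseTime a t = (x : ℕ∞) then (1 : ℤ) else 0) := by
  have hfil : (Finset.Icc 1 n).filter (fun t => reuseTime a t = (x : ℕ∞))
      = (Finset.Icc (x + 1) n).filter (fun t => reuseTime a t = (x : ℕ∞)) := by
    ext t
    simp only [Finset.mem_filter, Finset.mem_Icc]
    constructor
    · rintro ⟨⟨h1, h2⟩, h3⟩
      exact ⟨⟨rt_eq_imp a t x hx h3, h2⟩, h3⟩
    · rintro ⟨⟨h1, h2⟩, h3⟩
      exact ⟨⟨by omega, h2⟩, h3⟩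
  rw [rtHist, hfil, Finset.sum_boole]

lemma firstAcc_card (a : ℕ → ℕ) (n x : ℕ) (hx : 1 ≤ x) (hxn : x ≤ n) :
    ((((dataSet a n)).filter (fun e => firstAcc a n e = x)).card : ℤ)
      = (if (Pset a x x).Nonempty then 0 else 1) := by
  have hxmem : x ∈ Finset.Icc 1 n := Finset.mem_Icc.mpr ⟨hx, hxn⟩
  have hPiff : (Pset a x x).Nonempty ↔ ∃ s, 1 ≤ s ∧ s ≤ x - 1 ∧ a s = a x := by
    unfold Pset
    rw [Finset.filter_nonempty_iff]
    constructor
    · rintro ⟨s, hs, h⟩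
      rw [Finset.mem_Icc] at hs
      exact ⟨s, by omega, by omega, h⟩
    · rintro ⟨s, h1, h2, h3⟩
      exact ⟨s, Finset.mem_Icc.mpr ⟨by omega, h2⟩, h3⟩
  by_cases hP : (Pset a x x).Nonempty
  · rw [if_pos hP]
    have : ((dataSet a n)).filter (fun e => firstAcc a n e = x) = ∅ := by
      rw [Finset.eq_empty_iff_forall_notMem]
      intro e he
      rw [Finset.mem_filter] at he
      obtain ⟨s, hs1, hs2, hs3⟩ := hPiff.mp hP
      have hsS : s ∈ {t | t ∈ Finset.Icc 1 n ∧ a t = e} := by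
        constructor
        · exact Finset.mem_Icc.mpr ⟨hs1, by omega⟩
        · -- a s = e : need a x = e
          have hne : {t | t ∈ Finset.Icc 1 n ∧ a t = e}.Nonempty := by
            rw [dataSet, Finset.mem_image] at he
            obtain ⟨⟨t, ht, hte⟩, _⟩ := he
            exact ⟨t, ht, hte⟩
          have hmem := Nat.sInf_mem hne
          rw [show sInf {t | t ∈ Finset.Icc 1 n ∧ a t = e} = firstAcc a n e from rfl,
            he.2] at hmem
          rw [hs3, hmem.2]
      have := Nat.sInf_le hsS
      rw [show sInf {t | t ∈ Finset.Icc 1 n ∧ a t = e} = firstAcc a n e from rfl,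
        he.2] at this
      omega
    rw [this]; simp
  · rw [if_neg hP]
    have : ((dataSet a n)).filter (fun e => firstAcc a n e = x) = {a x} := by
      ext e
      rw [Finset.mem_filter, Finset.mem_singleton]
      constructor
      · rintro ⟨he, hf⟩
        have hne : {t | t ∈ Finset.Icc 1 n ∧ a t = e}.Nonempty := by
          rw [dataSet, Finset.mem_image] at he
          obtain ⟨t, ht, hte⟩ := he
          exact ⟨t, ht, hte⟩
        have hmem := Nat.sInf_mem hne
        rw [show sInf {t | t ∈ Finset.Icc 1 n ∧ a t = e} = firstAcc a n e from rfl,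
          hf] at hmem
        exact hmem.2.symm ▸ rfl
      · rintro rfl
        refine ⟨Finset.mem_image_of_mem a hxmem, ?_⟩
        have hxS : x ∈ {t | t ∈ Finset.Icc 1 n ∧ a t = a x} := ⟨hxmem, rfl⟩
        have hne : {t | t ∈ Finset.Icc 1 n ∧ a t = a x}.Nonempty := ⟨x, hxS⟩
        have hmem := Nat.sInf_mem hne
        have hle := Nat.sInf_le hxS
        have hge : x ≤ sInf {t | t ∈ Finset.Icc 1 n ∧ a t = a x} := by
          by_contra hc
          push_neg at hc
          apply hP
          apply hPiff.mpr
          refine ⟨sInf {t | t ∈ Finset.Icc 1 n ∧ a t = a x}, ?_, ?_, hmem.2⟩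
          · have := Finset.mem_Icc.mp hmem.1; omega
          · omega
        exact le_antisymm hle hge
    rw [this]; simp

lemma lastAcc_card (a : ℕ → ℕ) (n y : ℕ) (hy : 1 ≤ y) (hyn : y ≤ n) :
    ((((dataSet a n)).filter (fun e => lastAcc a n e = y)).card : ℤ)
      = (if a y ∈ (Finset.Icc (y + 1) n).image a then 0 else 1) := by
  have hymem : y ∈ Finset.Icc 1 n := Finset.mem_Icc.mpr ⟨hy, hyn⟩
  have hbdd : ∀ e, BddAbove {t | t ∈ Finset.Icc 1 n ∧ a t = e} := by
    intro e
    exact ⟨n, fun t ht => (Finset.mem_Icc.mp ht.1).2⟩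
  by_cases hQ : a y ∈ (Finset.Icc (y + 1) n).image a
  · rw [if_pos hQ]
    have : ((dataSet a n)).filter (fun e => lastAcc a n e = y) = ∅ := by
      rw [Finset.eq_empty_iff_forall_notMem]
      intro e he
      rw [Finset.mem_filter] at he
      have hne : {t | t ∈ Finset.Icc 1 n ∧ a t = e}.Nonempty := by
        rw [dataSet, Finset.mem_image] at he
        obtain ⟨⟨t, ht, hte⟩, _⟩ := he
        exact ⟨t, ht, hte⟩
      have hmem := Nat.sSup_mem hne (hbdd e)
      rw [show sSup {t | t ∈ Finset.Icc 1 n ∧ a t = e} = lastAcc a n e from rfl,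
        he.2] at hmem
      -- hmem : y ∈ Icc 1 n ∧ a y = e
      rw [Finset.mem_image] at hQ
      obtain ⟨s, hs, hsy⟩ := hQ
      rw [Finset.mem_Icc] at hs
      have hsS : s ∈ {t | t ∈ Finset.Icc 1 n ∧ a t = e} := by
        refine ⟨Finset.mem_Icc.mpr ⟨by omega, hs.2⟩, by rw [hsy, hmem.2]⟩
      have := le_csSup (hbdd e) hsS
      rw [show sSup {t | t ∈ Finset.Icc 1 n ∧ a t = e} = lastAcc a n e from rfl,
        he.2] at this
      omega
    rw [this]; simp
  · rw [if_neg hQ]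
    have : ((dataSet a n)).filter (fun e => lastAcc a n e = y) = {a y} := by
      ext e
      rw [Finset.mem_filter, Finset.mem_singleton]
      constructor
      · rintro ⟨he, hf⟩
        have hne : {t | t ∈ Finset.Icc 1 n ∧ a t = e}.Nonempty := by
          rw [dataSet, Finset.mem_image] at he
          obtain ⟨t, ht, hte⟩ := he
          exact ⟨t, ht, hte⟩
        have hmem := Nat.sSup_mem hne (hbdd e)
        rw [show sSup {t | t ∈ Finset.Icc 1 n ∧ a t = e} = lastAcc a n e from rfl,
          hf] at hmem
        exact hmem.2.symm ▸ rfl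
      · rintro rfl
        refine ⟨Finset.mem_image_of_mem a hymem, ?_⟩
        have hyS : y ∈ {t | t ∈ Finset.Icc 1 n ∧ a t = a y} := ⟨hymem, rfl⟩
        have hne : {t | t ∈ Finset.Icc 1 n ∧ a t = a y}.Nonempty := ⟨y, hyS⟩
        have hmem := Nat.sSup_mem hne (hbdd (a y))
        have hge := le_csSup (hbdd (a y)) hyS
        have hle : sSup {t | t ∈ Finset.Icc 1 n ∧ a t = a y} ≤ y := by
          by_contra hc
          push_neg at hc
          apply hQ
          rw [Finset.mem_image]
          refine ⟨sSup {t | t ∈ Finset.Icc 1 n ∧ a t = a y}, ?_, hmem.2⟩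
          rw [Finset.mem_Icc]
          have := Finset.mem_Icc.mp hmem.1
          omega
        exact le_antisymm hle hge
    rw [this]; simp

lemma wss_last_diff (a : ℕ → ℕ) (n x : ℕ) (hx : 1 ≤ x) (hxn : x ≤ n) :
    (wss a n x : ℤ) - (wss a n (x - 1) : ℤ)
      = (if a (n - x + 1) ∈ (Finset.Icc (n - x + 2) n).image a then 0 else 1) := by
  unfold wss
  have h1 : n - (x - 1) + 1 = n - x + 2 := by omega
  rw [h1]
  have h2 : Finset.Icc (n - x + 1) n = insert (n - x + 1) (Finset.Icc (n - x + 2) n) := by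
    ext s; simp only [Finset.mem_Icc, Finset.mem_insert]; omega
  rw [h2, Finset.image_insert, Finset.card_insert_eq_ite]
  by_cases hc : a (n - x + 1) ∈ (Finset.Icc (n - x + 2) n).image a
  · rw [if_pos hc, if_pos hc]; ring
  · rw [if_neg hc, if_neg hc]; push_cast; ring

/-- Second finite difference of the total working-set size recovers the
reuse-time histogram. -/
theorem totalW_second_difference (n m : ℕ) (a : ℕ → ℕ) (hm : (dataSet a n).card = m)
    (x : ℕ) (hx1 : 1 ≤ x) (hx : x + 1 ≤ n) :
    totalW a n (x + 1) - 2 * totalW a n x + totalW a n (x - 1)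
      = -(rtHist a n x : ℤ)
        - (((dataSet a n).filter (fun e => firstAcc a n e = x)).card : ℤ)
        - (((dataSet a n).filter (fun e => lastAcc a n e = n - x + 1)).card : ℤ) := by
  have hxn : x ≤ n := by omega
  have D1 := firstDiff a n (x + 1) (by omega) hx
  simp only [Nat.add_sub_cancel] at D1
  have D2 := firstDiff a n x hx1 hxn
  have hsplit : Finset.Icc x n = insert x (Finset.Icc (x + 1) n) := by
    ext s; simp only [Finset.mem_Icc, Finset.mem_insert]; omega
  have hnotmem : x ∉ Finset.Icc (x + 1) n := by
    simp only [Finset.mem_Icc]; omega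
  rw [hsplit, Finset.sum_insert hnotmem] at D2
  have hsum : (∑ t ∈ Finset.Icc (x + 1) n, if (Pset a t (x + 1)).Nonempty then (0 : ℤ) else 1)
      - (∑ t ∈ Finset.Icc (x + 1) n, if (Pset a t x).Nonempty then (0 : ℤ) else 1)
      = -(rtHist a n x : ℤ) := by
    rw [← Finset.sum_sub_distrib, rtHist_eq a n x hx1, ← Finset.sum_neg_distrib]
    apply Finset.sum_congr rfl
    intro t ht
    exact Pset_diff a t x hx1 (Finset.mem_Icc.mp ht).1
  have hfirst := firstAcc_card a n x hx1 hxn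
  have hlast := lastAcc_card a n (n - x + 1) (by omega) (by omega)
  have h7 : n - x + 1 + 1 = n - x + 2 := by omega
  rw [h7] at hlast
  have hw := wss_last_diff a n x hx1 hxn
  linarith [D1, D2, hsum, hfirst, hlast, hw]
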